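/- arXiv:2207.00853 — 3 statements merged into one kernel-verified Lean document; each statement's English description precedes it below -/
import Mathlib

section
/- Assume M > 0. For all finite Borel measures ν, λ⁺, λ⁻ on T one has M·Ψ( ‖λ⁺ − λ⁻‖_TV / (M·(1 + ν(T))) ) ≤ Ent(λ⁺|θ_ν) + Ent(λ⁻|θ_ν), where ‖λ⁺ − λ⁻‖_TV denotes the total variation norm of the finite signed measure λ⁺ − λ⁻. -/
/-!
Young's inequality for `φ`, whose convex conjugate is `t ↦ exp t - 1`, gives pointwise
`t |u - w| - 2 (cosh t - 1) ≤ φ u + φ w`. Applied to the densities of `λ±` with respect to `θ_ν`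
and integrated, it yields `t ‖λ⁺ - λ⁻‖_TV - 2 θ_ν(T) (cosh t - 1) ≤ Ent(λ⁺|θ_ν) + Ent(λ⁻|θ_ν)`
for every `t ≥ 0`. A geometric mean of densities is at most their sum, so `θ_ν ≤ κ⁺_ν + κ⁻_ν`
and `θ_ν(T) ≤ M (1 + ν(T))²`. Finally `Ψ` is the convex conjugate of `τ ↦ 2 (cosh τ - 1)`,
attained at `τ = arsinh (s / 2)`; the choice `t = τ / (1 + ν(T))` together with
`cosh (a τ) - 1 ≤ a² (cosh τ - 1)` for `0 ≤ a ≤ 1` absorbs the factor `(1 + ν(T))²`.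
-/

open MeasureTheory
open scoped ENNReal Classical

/-- The entropy function `φ(s) = s·log s − s + 1` (note `φ(0) = 1` since `Real.log 0 = 0`). -/
noncomputable def phiEnt (s : ℝ) : ℝ := s * Real.log s - s + 1

/-- Relative entropy `Ent(μ|ϑ) = ∫ φ(dμ/dϑ) dϑ` if `μ ≪ ϑ`, `+∞` otherwise. -/
noncomputable def Ent {T : Type*} [MeasurableSpace T] (μ ϑ : Measure T) : ℝ≥0∞ :=
  if μ ≪ ϑ then ∫⁻ x, ENNReal.ofReal (phiEnt ((μ.rnDeriv ϑ x).toReal)) ∂ϑ else ⊤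

/-- `c_ν(x) = ∫ c(x,y) ν(dy)`. -/
noncomputable def cInt {T : Type*} [MeasurableSpace T] (c : T → T → ℝ) (ν : Measure T) (x : T) : ℝ :=
  ∫ y, c x y ∂ν

/-- The birth kernel `κ⁺_ν = c_ν · γ`. -/
noncomputable def kBirth {T : Type*} [MeasurableSpace T] (γ : Measure T) (c : T → T → ℝ)
    (ν : Measure T) : Measure T :=
  γ.withDensity fun x => ENNReal.ofReal (cInt c ν x)

/-- The death kernel `κ⁻_ν = c_ν · ν`. -/
noncomputable def kDeath {T : Type*} [MeasurableSpace T] (c : T → T → ℝ)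
    (ν : Measure T) : Measure T :=
  ν.withDensity fun x => ENNReal.ofReal (cInt c ν x)

/-- The geometric mean `θ_ν` of `κ⁺_ν` and `κ⁻_ν`. -/
noncomputable def thetaM {T : Type*} [MeasurableSpace T] (γ : Measure T) (c : T → T → ℝ)
    (ν : Measure T) : Measure T :=
  (kBirth γ c ν + kDeath c ν).withDensity fun x =>
    ((kBirth γ c ν).rnDeriv (kBirth γ c ν + kDeath c ν) x *
      (kDeath c ν).rnDeriv (kBirth γ c ν + kDeath c ν) x) ^ (1 / 2 : ℝ)

/-- The function `Ψ(s) = s·log((s + √(s²+4))/2) − √(s²+4) + 2`. -/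
noncomputable def Psi (s : ℝ) : ℝ :=
  s * Real.log ((s + Real.sqrt (s ^ 2 + 4)) / 2) - Real.sqrt (s ^ 2 + 4) + 2

lemma phiEnt_nonneg {x : ℝ} (hx : 0 ≤ x) : 0 ≤ phiEnt x := by
  rcases hx.eq_or_lt with rfl | hx
  · simp [phiEnt]
  · have h := Real.add_one_le_exp (-Real.log x)
    rw [Real.exp_neg, Real.exp_log hx] at h
    have : x * (1 - Real.log x) ≤ 1 := by
      have := mul_le_mul_of_nonneg_left h hx.le
      rwa [mul_inv_cancel₀ hx.ne', add_comm] at this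
    unfold phiEnt
    linarith

lemma mul_le_phiEnt_add_exp_sub_one (t : ℝ) {x : ℝ} (hx : 0 ≤ x) :
    t * x ≤ phiEnt x + (Real.exp t - 1) := by
  rcases hx.eq_or_lt with rfl | hx
  · simp [phiEnt, (Real.exp_pos t).le]
  · have h := Real.add_one_le_exp (t - Real.log x)
    rw [Real.exp_sub, Real.exp_log hx] at h
    have := mul_le_mul_of_nonneg_left h hx.le
    rw [mul_div_cancel₀ _ hx.ne'] at this
    unfold phiEnt
    linarith

lemma mul_abs_sub_le_phiEnt_add_phiEnt (t : ℝ) {u w : ℝ} (hu : 0 ≤ u) (hw : 0 ≤ w) :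
    t * |u - w| - 2 * (Real.cosh t - 1) ≤ phiEnt u + phiEnt w := by
  have hcosh : 2 * Real.cosh t = Real.exp t + Real.exp (-t) := by rw [Real.cosh_eq]; ring
  rcases le_total w u with h | h
  · rw [abs_of_nonneg (sub_nonneg.2 h)]
    linarith [mul_le_phiEnt_add_exp_sub_one t hu, mul_le_phiEnt_add_exp_sub_one (-t) hw]
  · rw [abs_of_nonpos (sub_nonpos.2 h)]
    linarith [mul_le_phiEnt_add_exp_sub_one (-t) hu, mul_le_phiEnt_add_exp_sub_one t hw]

lemma Real.sinh_mul_le_mul_sinh {a y : ℝ} (ha₀ : 0 ≤ a) (ha₁ : a ≤ 1) (hy : 0 ≤ y) :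
    Real.sinh (a * y) ≤ a * Real.sinh y := by
  set g : ℝ → ℝ := fun x => a * Real.sinh x - Real.sinh (a * x)
  have hg : ∀ x, HasDerivAt g (a * (Real.cosh x - Real.cosh (a * x))) x := fun x => by
    refine (((Real.hasDerivAt_sinh x).const_mul a).sub
      ((Real.hasDerivAt_sinh (a * x)).comp x ((hasDerivAt_id x).const_mul a))).congr_deriv ?_
    ring
  have hmono : MonotoneOn g (Set.Ici 0) := by
    refine monotoneOn_of_deriv_nonneg (convex_Ici 0)
      (fun x _ => (hg x).continuousAt.continuousWithinAt)
      (fun x _ => (hg x).differentiableAt.differentiableWithinAt) fun x hx => ?_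
    rw [interior_Ici] at hx
    have hax : Real.cosh (a * x) ≤ Real.cosh x := by
      rw [Real.cosh_le_cosh, abs_of_nonneg (mul_nonneg ha₀ hx.out.le), abs_of_nonneg hx.out.le]
      exact mul_le_of_le_one_left hx.out.le ha₁
    rw [(hg x).deriv]
    exact mul_nonneg ha₀ (sub_nonneg.2 hax)
  have := hmono Set.self_mem_Ici hy hy
  simpa [g] using this

lemma Real.cosh_mul_sub_one_le {a : ℝ} (ha₀ : 0 ≤ a) (ha₁ : a ≤ 1) (y : ℝ) :
    Real.cosh (a * y) - 1 ≤ a ^ 2 * (Real.cosh y - 1) := by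
  wlog hy : 0 ≤ y generalizing y
  · have := this (-y) (by linarith)
    rwa [mul_neg, Real.cosh_neg, Real.cosh_neg] at this
  have half : ∀ z, Real.cosh z - 1 = 2 * Real.sinh (z / 2) ^ 2 := fun z => by
    have h := Real.cosh_two_mul (z / 2)
    rw [mul_div_cancel₀ z two_ne_zero] at h
    rw [h, Real.cosh_sq]; ring
  have h := Real.sinh_mul_le_mul_sinh ha₀ ha₁ (y := y / 2) (by positivity)
  have h₀ : 0 ≤ Real.sinh (a * (y / 2)) := Real.sinh_nonneg_iff.2 (by positivity)
  rw [half, half, mul_div_assoc]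
  nlinarith [pow_le_pow_left₀ h₀ h 2]

lemma Psi_eq_arsinh (s : ℝ) :
    Psi s = s * Real.arsinh (s / 2) - 2 * (Real.cosh (Real.arsinh (s / 2)) - 1) := by
  have hsqrt : Real.sqrt (s ^ 2 + 4) = 2 * Real.sqrt (1 + (s / 2) ^ 2) := by
    rw [show s ^ 2 + 4 = 2 ^ 2 * (1 + (s / 2) ^ 2) by ring,
      Real.sqrt_mul (by positivity), Real.sqrt_sq zero_le_two]
  rw [Psi, Real.cosh_arsinh, Real.arsinh, hsqrt]
  ring_nf

lemma exists_mul_Psi_le {M K ρ v : ℝ} (hM : 0 < M) (hK : 1 ≤ K) (hρ₀ : 0 ≤ ρ)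
    (hρ : ρ ≤ M * K ^ 2) (hv : 0 ≤ v) :
    ∃ t, 0 ≤ t ∧ M * Psi (v / (M * K)) ≤ t * v - ρ * (2 * (Real.cosh t - 1)) := by
  set τ := Real.arsinh (v / (M * K) / 2) with hτ_def
  have hK₀ : 0 < K := one_pos.trans_le hK
  have hτ : 0 ≤ τ := Real.arsinh_nonneg_iff.2 (by positivity)
  refine ⟨K⁻¹ * τ, by positivity, ?_⟩
  have hscale := Real.cosh_mul_sub_one_le (inv_nonneg.2 hK₀.le) (inv_le_one_of_one_le₀ hK) τ
  have hρK : ρ * K⁻¹ ^ 2 ≤ M := by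
    rw [inv_pow, ← div_eq_mul_inv, div_le_iff₀ (by positivity)]; exact hρ
  have hcosh : 0 ≤ Real.cosh τ - 1 := sub_nonneg.2 (Real.one_le_cosh τ)
  calc M * Psi (v / (M * K)) = K⁻¹ * τ * v - M * (2 * (Real.cosh τ - 1)) := by
        rw [Psi_eq_arsinh, ← hτ_def]; field_simp
    _ ≤ K⁻¹ * τ * v - ρ * K⁻¹ ^ 2 * (2 * (Real.cosh τ - 1)) := by gcongr
    _ ≤ K⁻¹ * τ * v - ρ * (2 * (Real.cosh (K⁻¹ * τ) - 1)) := by nlinarith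

lemma ENNReal.mul_rpow_one_half_le_add (a b : ℝ≥0∞) : (a * b) ^ (1 / 2 : ℝ) ≤ a + b := by
  have hsq : a * b ≤ (a + b) ^ (2 : ℝ) := by
    rw [ENNReal.rpow_two, sq]
    exact mul_le_mul' le_self_add le_add_self
  calc (a * b) ^ (1 / 2 : ℝ) ≤ ((a + b) ^ (2 : ℝ)) ^ (1 / 2 : ℝ) :=
        ENNReal.rpow_le_rpow hsq (by norm_num)
    _ = a + b := by rw [← ENNReal.rpow_mul]; norm_num

namespace MeasureTheory

variable {α : Type*} [MeasurableSpace α]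

lemma ofReal_integral_le_lintegral_ofReal {μ : Measure α} {f : α → ℝ} (hf : Integrable f μ) :
    ENNReal.ofReal (∫ x, f x ∂μ) ≤ ∫⁻ x, ENNReal.ofReal (f x) ∂μ := by
  have h : ∫ x, f x ∂μ ≤ (∫⁻ x, ENNReal.ofReal (f x) ∂μ).toReal := by
    rw [integral_eq_lintegral_pos_part_sub_lintegral_neg_part hf]
    exact sub_le_self _ ENNReal.toReal_nonneg
  exact (ENNReal.ofReal_le_ofReal h).trans ENNReal.ofReal_toReal_le

lemma totalVariation_sub_le_integral_abs_rnDeriv {μ₁ μ₂ θ : Measure α}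
    [IsFiniteMeasure μ₁] [IsFiniteMeasure μ₂] [SigmaFinite θ] (h₁ : μ₁ ≪ θ) (h₂ : μ₂ ≪ θ) :
    ((μ₁.toSignedMeasure - μ₂.toSignedMeasure).totalVariation Set.univ).toReal ≤
      ∫ x, |(μ₁.rnDeriv θ x).toReal - (μ₂.rnDeriv θ x).toReal| ∂θ := by
  set f := fun x => (μ₁.rnDeriv θ x).toReal - (μ₂.rnDeriv θ x).toReal
  have hf : Integrable f θ :=
    Measure.integrable_toReal_rnDeriv.sub Measure.integrable_toReal_rnDeriv
  have hle : (μ₁.toSignedMeasure - μ₂.toSignedMeasure).totalVariation ≤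
      θ.withDensity fun x => ‖f x‖ₑ := by
    rw [SignedMeasure.totalVariation_eq_variation]
    refine VectorMeasure.variation_le_of_forall_enorm_le fun E hE => ?_
    rw [withDensity_apply _ hE, sub_apply,
      Measure.toSignedMeasure_apply_measurable hE, Measure.toSignedMeasure_apply_measurable hE,
      ← Measure.setIntegral_toReal_rnDeriv h₁, ← Measure.setIntegral_toReal_rnDeriv h₂,
      ← integral_sub Measure.integrable_toReal_rnDeriv.integrableOn
        Measure.integrable_toReal_rnDeriv.integrableOn]
    exact enorm_integral_le_lintegral_enorm _
  refine ENNReal.toReal_le_of_le_ofReal (integral_nonneg fun _ => abs_nonneg _) ?_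
  refine (hle Set.univ).trans_eq ?_
  rw [withDensity_apply _ MeasurableSet.univ, Measure.restrict_univ,
    ← ofReal_integral_norm_eq_lintegral_enorm hf]
  rfl

lemma ofReal_mul_totalVariation_sub_le_Ent_add_Ent {μ₁ μ₂ θ : Measure α}
    [IsFiniteMeasure μ₁] [IsFiniteMeasure μ₂] [IsFiniteMeasure θ] {t : ℝ} (ht : 0 ≤ t) :
    ENNReal.ofReal (t * ((μ₁.toSignedMeasure - μ₂.toSignedMeasure).totalVariation Set.univ).toReal
        - θ.real Set.univ * (2 * (Real.cosh t - 1))) ≤ Ent μ₁ θ + Ent μ₂ θ := by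
  by_cases h₁ : μ₁ ≪ θ
  swap
  · simp [Ent, h₁]
  by_cases h₂ : μ₂ ≪ θ
  swap
  · simp [Ent, h₂]
  rw [Ent, Ent, if_pos h₁, if_pos h₂]
  set f := fun x => (μ₁.rnDeriv θ x).toReal
  set g := fun x => (μ₂.rnDeriv θ x).toReal
  have habs : Integrable (fun x => t * |f x - g x|) θ :=
    (Measure.integrable_toReal_rnDeriv.sub Measure.integrable_toReal_rnDeriv).abs.const_mul t
  have hint := habs.sub (integrable_const (2 * (Real.cosh t - 1)))
  calc _ ≤ ENNReal.ofReal (∫ x, (t * |f x - g x| - 2 * (Real.cosh t - 1)) ∂θ) := by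
        refine ENNReal.ofReal_le_ofReal ?_
        rw [integral_sub habs (integrable_const _), integral_const_mul, integral_const,
          smul_eq_mul]
        gcongr
        exact totalVariation_sub_le_integral_abs_rnDeriv h₁ h₂
    _ ≤ ∫⁻ x, ENNReal.ofReal (t * |f x - g x| - 2 * (Real.cosh t - 1)) ∂θ :=
        ofReal_integral_le_lintegral_ofReal hint
    _ ≤ ∫⁻ x, (ENNReal.ofReal (phiEnt (f x)) + ENNReal.ofReal (phiEnt (g x))) ∂θ := by
        refine lintegral_mono fun x => ?_
        rw [← ENNReal.ofReal_add (phiEnt_nonneg ENNReal.toReal_nonneg)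
          (phiEnt_nonneg ENNReal.toReal_nonneg)]
        exact ENNReal.ofReal_le_ofReal
          (mul_abs_sub_le_phiEnt_add_phiEnt t ENNReal.toReal_nonneg ENNReal.toReal_nonneg)
    _ = _ := lintegral_add_left (by unfold phiEnt; fun_prop) _

lemma Measure.withDensity_rpow_one_half_rnDeriv_mul_le (μ₁ μ₂ ν : Measure α) :
    ν.withDensity (fun x => (μ₁.rnDeriv ν x * μ₂.rnDeriv ν x) ^ (1 / 2 : ℝ)) ≤ μ₁ + μ₂ :=
  calc _ ≤ ν.withDensity (μ₁.rnDeriv ν + μ₂.rnDeriv ν) :=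
        withDensity_mono (ae_of_all _ fun _ => ENNReal.mul_rpow_one_half_le_add _ _)
    _ = ν.withDensity (μ₁.rnDeriv ν) + ν.withDensity (μ₂.rnDeriv ν) :=
        withDensity_add_left (Measure.measurable_rnDeriv _ _) _
    _ ≤ μ₁ + μ₂ :=
        add_le_add (Measure.withDensity_rnDeriv_le _ _) (Measure.withDensity_rnDeriv_le _ _)

end MeasureTheory

section Kernels

variable {T : Type*} [MeasurableSpace T] {γ : Measure T} {c : T → T → ℝ} {ν : Measure T}
  [IsFiniteMeasure ν] {C : ℝ}

lemma cInt_le (hc₀ : ∀ x y, 0 ≤ c x y) (hC : ∀ x y, c x y ≤ C) (x : T) :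
    cInt c ν x ≤ C * ν.real Set.univ :=
  (Real.le_norm_self _).trans <| norm_integral_le_of_norm_le_const <|
    ae_of_all _ fun y => (Real.norm_of_nonneg (hc₀ x y)).trans_le (hC x y)

lemma withDensity_ofReal_cInt_le (hc₀ : ∀ x y, 0 ≤ c x y) (hC : ∀ x y, c x y ≤ C)
    (μ : Measure T) :
    μ.withDensity (fun x => ENNReal.ofReal (cInt c ν x)) ≤
      ENNReal.ofReal (C * ν.real Set.univ) • μ := by
  rw [← withDensity_const]
  exact withDensity_mono (ae_of_all _ fun x => ENNReal.ofReal_le_ofReal (cInt_le hc₀ hC x))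

lemma thetaM_le (hc₀ : ∀ x y, 0 ≤ c x y) (hC : ∀ x y, c x y ≤ C) :
    thetaM γ c ν ≤ ENNReal.ofReal (C * ν.real Set.univ) • (γ + ν) := by
  rw [smul_add]
  exact (Measure.withDensity_rpow_one_half_rnDeriv_mul_le _ _ _).trans
    (add_le_add (withDensity_ofReal_cInt_le hc₀ hC γ) (withDensity_ofReal_cInt_le hc₀ hC ν))

lemma thetaM_univ_le [IsFiniteMeasure γ] (hc₀ : ∀ x y, 0 ≤ c x y) (hC : ∀ x y, c x y ≤ C) :
    thetaM γ c ν Set.univ ≤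
      ENNReal.ofReal (C * ν.real Set.univ * (γ.real Set.univ + ν.real Set.univ)) := by
  refine (thetaM_le hc₀ hC Set.univ).trans_eq ?_
  rw [Measure.smul_apply, Measure.add_apply, smul_eq_mul,
    ENNReal.ofReal_mul' (add_nonneg measureReal_nonneg measureReal_nonneg),
    ENNReal.ofReal_add measureReal_nonneg measureReal_nonneg, ofReal_measureReal,
    ofReal_measureReal]

end Kernels

theorem net_flux_lower_bound_general {T : Type*}
    [MeasurableSpace T]
    (γ : Measure T) [IsFiniteMeasure γ]
    (c : T → T → ℝ)
    (hc_nonneg : ∀ x y, 0 ≤ c x y)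
    (hc_bdd : BddAbove (Set.range fun p : T × T => c p.1 p.2))
    (hM : 0 < (⨆ p : T × T, c p.1 p.2) * (1 + (γ Set.univ).toReal))
    (ν lamP lamM : Measure T) [IsFiniteMeasure ν] [IsFiniteMeasure lamP] [IsFiniteMeasure lamM] :
    ENNReal.ofReal ((⨆ p : T × T, c p.1 p.2) * (1 + (γ Set.univ).toReal) *
        Psi ((((lamP.toSignedMeasure - lamM.toSignedMeasure).totalVariation Set.univ).toReal) /
          ((⨆ p : T × T, c p.1 p.2) * (1 + (γ Set.univ).toReal) *
            (1 + (ν Set.univ).toReal)))) ≤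
      Ent lamP (thetaM γ c ν) + Ent lamM (thetaM γ c ν) := by
  set C := ⨆ p : T × T, c p.1 p.2
  have hC : ∀ x y, c x y ≤ C := fun x y => le_ciSup hc_bdd (x, y)
  have hC₀ : 0 < C := pos_of_mul_pos_left hM (by positivity)
  have hθ := thetaM_univ_le (γ := γ) (ν := ν) hc_nonneg hC
  have : IsFiniteMeasure (thetaM γ c ν) := ⟨hθ.trans_lt ENNReal.ofReal_lt_top⟩
  have hθM : (thetaM γ c ν).real Set.univ ≤
      C * (1 + γ.real Set.univ) * (1 + ν.real Set.univ) ^ 2 := by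
    refine (ENNReal.toReal_le_of_le_ofReal (by positivity) hθ).trans ?_
    have hγ : 0 ≤ γ.real Set.univ := measureReal_nonneg
    have hν : 0 ≤ ν.real Set.univ := measureReal_nonneg
    nlinarith [mul_nonneg hγ hν, mul_nonneg (mul_nonneg hγ hν) hν]
  obtain ⟨t, ht, hΨ⟩ := exists_mul_Psi_le hM (le_add_of_nonneg_right measureReal_nonneg)
    measureReal_nonneg hθM ENNReal.toReal_nonneg
  exact (ENNReal.ofReal_le_ofReal hΨ).trans (ofReal_mul_totalVariation_sub_le_Ent_add_Ent ht)

/-- Lemma 2.4, inequality (2.6): with `M = ‖c‖_∞·(1 + γ(T)) > 0`, for all finite measures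
`ν, λ⁺, λ⁻`, `M·Ψ(‖λ⁺ − λ⁻‖_TV/(M·(1 + ν(T)))) ≤ Ent(λ⁺|θ_ν) + Ent(λ⁻|θ_ν)`. -/
theorem net_flux_lower_bound {T : Type*} [TopologicalSpace T] [CompactSpace T] [PolishSpace T]
    [MeasurableSpace T] [BorelSpace T]
    (γ : Measure T) [IsFiniteMeasure γ]
    (c : T → T → ℝ) (hc_meas : Measurable fun p : T × T => c p.1 p.2)
    (hc_nonneg : ∀ x y, 0 ≤ c x y)
    (hc_bdd : BddAbove (Set.range fun p : T × T => c p.1 p.2))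
    (hc_diag : ∀ x, c x x = 0)
    (hM : 0 < (⨆ p : T × T, c p.1 p.2) * (1 + (γ Set.univ).toReal))
    (ν lamP lamM : Measure T) [IsFiniteMeasure ν] [IsFiniteMeasure lamP] [IsFiniteMeasure lamM] :
    ENNReal.ofReal ((⨆ p : T × T, c p.1 p.2) * (1 + (γ Set.univ).toReal) *
        Psi ((((lamP.toSignedMeasure - lamM.toSignedMeasure).totalVariation Set.univ).toReal) /
          ((⨆ p : T × T, c p.1 p.2) * (1 + (γ Set.univ).toReal) *
            (1 + (ν Set.univ).toReal)))) ≤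
      Ent lamP (thetaM γ c ν) + Ent lamM (thetaM γ c ν) :=
  net_flux_lower_bound_general γ c hc_nonneg hc_bdd hM ν lamP lamM
end

section
/- Let τ > 0 and let u₀ ∈ L¹(γ) satisfy 1/C ≤ u₀(x) ≤ C for γ-a.e. x, for some constant C > 1. Let u : [0,τ] → L¹(γ) be continuous with u(0) = u₀, u(t) ≥ 0 γ-a.e., and u(t) = u₀ + ∫₀ᵗ c_{u(s)}·(1 − u(s)) ds in L¹(γ) for all t ∈ [0,τ]. Then there exists a constant C_τ ≥ 1 such that 1/C_τ ≤ u(t)(x) ≤ C_τ for γ-a.e. x, for every t ∈ [0,τ]. -/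
open MeasureTheory intervalIntegral
open scoped ENNReal Classical

/-- `c_v(x) = ∫ c(x,y) v(y) γ(dy)`. -/
noncomputable def cDens {T : Type*} [MeasurableSpace T] (γ : Measure T) (c : T → T → ℝ)
    (v : T → ℝ) (x : T) : ℝ :=
  ∫ y, c x y * v y ∂γ

/-- The mean-field vector field in density form: `v ↦ c_v·(1 − v)`. -/
noncomputable def mfField {T : Type*} [MeasurableSpace T] (γ : Measure T) (c : T → T → ℝ)
    (v : T → ℝ) : T → ℝ :=
  fun x => cDens γ c v x * (1 - v x)

/-- The mean-field vector field as a (partially defined, defaulting to `0`) map on `L¹(γ)`. -/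
noncomputable def mfFieldLp {T : Type*} [MeasurableSpace T] (γ : Measure T) (c : T → T → ℝ)
    (v : Lp ℝ 1 γ) : Lp ℝ 1 γ :=
  if h : MemLp (mfField γ c v) 1 γ then MemLp.toLp _ h else 0

/-- `u : [0,τ] → L¹(γ)` is a strong solution of the mean-field equation
`∂_t u = c_u·(1 − u)` with initial datum `u₀`: it is continuous on `[0,τ]`,
nonnegative, and satisfies the integral (Bochner) formulation of the equation. -/
def IsMFSolution {T : Type*} [MeasurableSpace T] (γ : Measure T) (c : T → T → ℝ)
    (τ : ℝ) (u₀ : Lp ℝ 1 γ) (u : ℝ → Lp ℝ 1 γ) : Prop :=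
  ContinuousOn u (Set.Icc 0 τ) ∧ u 0 = u₀ ∧
    (∀ t ∈ Set.Icc (0 : ℝ) τ, 0 ≤ᵐ[γ] (u t : T → ℝ)) ∧
    ∀ t ∈ Set.Icc (0 : ℝ) τ,
      IntervalIntegrable (fun s => mfFieldLp γ c (u s)) MeasureTheory.volume 0 t ∧
        u t = u₀ + ∫ s in (0 : ℝ)..t, mfFieldLp γ c (u s)

/-!
The interval `[1/C, C]` contains the equilibrium `1` of `∂ₜu = κ (1 - u)`, `κ ≥ 0`, so it is
invariant, and the bounds hold with `Cτ = C`. Let `W(t) = ∫ dist(u(t)(x), [1/C, C]) γ(dx)`,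
which vanishes at `t = 0`. By convexity of the distance, tested against its subgradient at the
later time, `W(t) - W(s) ≤ ∫ₛᵗ ⟪sgn u(t), c_{u(r)} (1 - u(r))⟫ dr`. The integrand would be `≤ 0`
if `u(r)` were `u(t)`, and `0 ≤ c_{u(r)} ≤ M ‖u(r)‖`, so it is at most `M K ‖u(t) - u(r)‖`.
Uniform continuity of `u` then makes `W(t) - W(s) = o(t - s)` uniformly, whence `W ≡ 0`.
-/

open Set

/-- The distance from `a` to `[lo, hi]` (when `lo ≤ hi`). -/
def intervalPenalty (lo hi a : ℝ) : ℝ :=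
  max (a - hi) 0 + max (lo - a) 0

/-- A subgradient of `intervalPenalty lo hi` at `a`. -/
noncomputable def intervalPenaltySlope (lo hi a : ℝ) : ℝ :=
  if hi < a then 1 else if a < lo then -1 else 0

theorem intervalPenalty_nonneg (lo hi a : ℝ) : 0 ≤ intervalPenalty lo hi a :=
  add_nonneg (le_max_right _ _) (le_max_right _ _)

theorem intervalPenalty_eq_zero_iff {lo hi a : ℝ} :
    intervalPenalty lo hi a = 0 ↔ a ∈ Icc lo hi := by
  rw [intervalPenalty, add_eq_zero_iff_of_nonneg (le_max_right _ _) (le_max_right _ _),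
    max_eq_right_iff, max_eq_right_iff, mem_Icc, sub_nonpos, sub_nonpos, and_comm]

theorem abs_intervalPenaltySlope_le_one (lo hi a : ℝ) : |intervalPenaltySlope lo hi a| ≤ 1 := by
  unfold intervalPenaltySlope
  split_ifs <;> norm_num

theorem measurable_intervalPenaltySlope (lo hi : ℝ) : Measurable (intervalPenaltySlope lo hi) :=
  Measurable.ite measurableSet_Ioi measurable_const
    (Measurable.ite measurableSet_Iio measurable_const measurable_const)

theorem intervalPenalty_sub_le {lo hi : ℝ} (h : lo ≤ hi) (a b : ℝ) :
    intervalPenalty lo hi a - intervalPenalty lo hi b ≤ intervalPenaltySlope lo hi a * (a - b) := by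
  unfold intervalPenalty intervalPenaltySlope
  have := le_max_left (b - hi) 0
  have := le_max_right (b - hi) 0
  have := le_max_left (lo - b) 0
  have := le_max_right (lo - b) 0
  rcases max_cases (a - hi) 0 with ⟨h₁, h₁'⟩ | ⟨h₁, h₁'⟩ <;>
    rcases max_cases (lo - a) 0 with ⟨h₂, h₂'⟩ | ⟨h₂, h₂'⟩ <;> split_ifs <;> linarith

theorem intervalPenaltySlope_mul_le {lo hi κ L : ℝ} (hlo : lo ≤ 1) (hhi : 1 ≤ hi) (hκ : 0 ≤ κ)
    (hκL : κ ≤ L) (a b : ℝ) : intervalPenaltySlope lo hi a * (κ * (1 - b)) ≤ L * |a - b| := by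
  have hb : κ * |a - b| ≤ L * |a - b| := mul_le_mul_of_nonneg_right hκL (abs_nonneg _)
  unfold intervalPenaltySlope
  split_ifs with ha ha'
  · nlinarith [mul_le_mul_of_nonneg_left (le_abs_self (a - b)) hκ]
  · nlinarith [mul_le_mul_of_nonneg_left (neg_le_abs (a - b)) hκ]
  · simpa using mul_nonneg (hκ.trans hκL) (abs_nonneg (a - b))

section Penalty

variable {T : Type*} [MeasurableSpace T] {γ : Measure T} {lo hi : ℝ}

theorem MeasureTheory.AEStronglyMeasurable.intervalPenaltySlope_comp {f : T → ℝ}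
    (hf : AEStronglyMeasurable f γ) :
    AEStronglyMeasurable (fun x => intervalPenaltySlope lo hi (f x)) γ :=
  ((measurable_intervalPenaltySlope lo hi).comp_aemeasurable hf.aemeasurable).aestronglyMeasurable

theorem MeasureTheory.Integrable.intervalPenalty_comp [IsFiniteMeasure γ] {f : T → ℝ}
    (hf : Integrable f γ) :
    Integrable (fun x => intervalPenalty lo hi (f x)) γ :=
  (hf.sub (integrable_const hi)).pos_part.add ((integrable_const lo).sub hf).pos_part

theorem integral_intervalPenalty_eq_zero_iff [IsFiniteMeasure γ] {f : T → ℝ}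
    (hf : Integrable f γ) :
    ∫ x, intervalPenalty lo hi (f x) ∂γ = 0 ↔ ∀ᵐ x ∂γ, f x ∈ Icc lo hi := by
  rw [integral_eq_zero_iff_of_nonneg (fun x => intervalPenalty_nonneg lo hi (f x))
    hf.intervalPenalty_comp]
  simp only [Filter.EventuallyEq, Pi.zero_apply, intervalPenalty_eq_zero_iff]

theorem integral_intervalPenalty_sub_le [IsFiniteMeasure γ] (h : lo ≤ hi) {f g : T → ℝ}
    (hf : Integrable f γ) (hg : Integrable g γ) :
    ∫ x, intervalPenalty lo hi (f x) ∂γ - ∫ x, intervalPenalty lo hi (g x) ∂γ ≤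
      ∫ x, intervalPenaltySlope lo hi (f x) * (f x - g x) ∂γ := by
  rw [← integral_sub hf.intervalPenalty_comp hg.intervalPenalty_comp]
  refine integral_mono (hf.intervalPenalty_comp.sub hg.intervalPenalty_comp)
    ((hf.sub hg).bdd_mul hf.aestronglyMeasurable.intervalPenaltySlope_comp
      (ae_of_all _ fun x => abs_intervalPenaltySlope_le_one lo hi (f x)))
    fun x => intervalPenalty_sub_le h (f x) (g x)

end Penalty

theorem image_le_left_of_forall_small_increment_le {w : ℝ → ℝ} {a b : ℝ}
    (h : ∀ ε > 0, ∃ δ > 0, ∀ s ∈ Icc a b, ∀ t ∈ Icc a b, s ≤ t → t - s ≤ δ →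
      w t ≤ w s + ε * (t - s)) :
    ∀ t ∈ Icc a b, w t ≤ w a := by
  intro t ht
  have key : ∀ ε > 0, w t ≤ w a + ε * (t - a) := by
    intro ε hε
    obtain ⟨δ, hδ, hstep⟩ := h ε hε
    have chain : ∀ k : ℕ, ∀ t ∈ Icc a b, t ≤ a + k * δ → w t ≤ w a + ε * (t - a) := by
      intro k
      induction k with
      | zero =>
        intro t ht htk
        have : t = a := le_antisymm (by simpa using htk) ht.1
        simp [this]
      | succ k ih =>
        intro t ht htk
        set s := max (t - δ) a
        have hs : s ∈ Icc a b := ⟨le_max_right _ _, max_le (by linarith [ht.2]) (ht.1.trans ht.2)⟩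
        have hst : s ≤ t := max_le (by linarith) ht.1
        have hsk : s ≤ a + k * δ := max_le (by push_cast at htk; linarith) (by
          have : (0 : ℝ) ≤ k * δ := by positivity
          linarith)
        have hlast := hstep s hs t ht hst (by linarith [le_max_left (t - δ) a])
        have hprefix := ih s hs hsk
        linarith
    obtain ⟨k, hk⟩ := exists_nat_ge ((b - a) / δ)
    refine chain k t ht ?_
    rw [div_le_iff₀ hδ] at hk
    linarith [ht.2]
  refine le_of_forall_pos_le_add fun ε hε => ?_
  have hd : 0 < t - a + 1 := by linarith [ht.1]
  calc w t ≤ w a + ε / (t - a + 1) * (t - a) := key _ (div_pos hε hd)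
    _ ≤ w a + ε := by
      gcongr
      rw [div_mul_eq_mul_div, div_le_iff₀ hd]
      nlinarith

section MeanField

variable {T : Type*} [MeasurableSpace T] {γ : Measure T} {c : T → T → ℝ} {M : ℝ}

theorem cDens_nonneg (hc_nonneg : ∀ x y, 0 ≤ c x y) {v : T → ℝ} (hv : 0 ≤ᵐ[γ] v) (x : T) :
    0 ≤ cDens γ c v x :=
  integral_nonneg_of_ae <| hv.mono fun y hy => mul_nonneg (hc_nonneg x y) hy

theorem norm_cDens_le (hc : ∀ x y, ‖c x y‖ ≤ M) (v : Lp ℝ 1 γ) (x : T) :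
    ‖cDens γ c v x‖ ≤ M * ‖v‖ := by
  calc ‖cDens γ c v x‖ ≤ ∫ y, M * ‖v y‖ ∂γ := by
        refine norm_integral_le_of_norm_le ((L1.integrable_coeFn v).norm.const_mul M)
          (ae_of_all _ fun y => ?_)
        rw [norm_mul]
        exact mul_le_mul_of_nonneg_right (hc x y) (norm_nonneg _)
    _ = M * ‖v‖ := by rw [MeasureTheory.integral_const_mul, L1.norm_eq_integral_norm]

theorem stronglyMeasurable_cDens [SFinite γ] (hc_meas : Measurable (Function.uncurry c))
    (v : Lp ℝ 1 γ) : StronglyMeasurable (cDens γ c v) :=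
  (hc_meas.stronglyMeasurable.mul
    ((Lp.stronglyMeasurable v).comp_measurable measurable_snd)).integral_prod_right

theorem mfFieldLp_ae_eq [IsFiniteMeasure γ] (hc_meas : Measurable (Function.uncurry c))
    (hc : ∀ x y, ‖c x y‖ ≤ M) (v : Lp ℝ 1 γ) : mfFieldLp γ c v =ᵐ[γ] mfField γ c v := by
  have hint : Integrable (mfField γ c v) γ :=
    ((integrable_const 1).sub (L1.integrable_coeFn v)).bdd_mul
      (stronglyMeasurable_cDens hc_meas v).aestronglyMeasurable
      (ae_of_all _ (norm_cDens_le hc v))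
  rw [mfFieldLp, dif_pos (memLp_one_iff_integrable.2 hint)]
  exact MemLp.coeFn_toLp _

end MeanField

theorem lpPairing_mul_toLp_apply {T : Type*} [MeasurableSpace T] {γ : Measure T} {g : T → ℝ}
    (hg : MemLp g ∞ γ) (v : Lp ℝ 1 γ) :
    (ContinuousLinearMap.mul ℝ ℝ).lpPairing γ ∞ 1 (hg.toLp g) v = ∫ x, g x * v x ∂γ := by
  rw [ContinuousLinearMap.lpPairing_eq_integral]
  exact integral_congr_ae <| hg.coeFn_toLp.mono fun x hx => by simp [hx]

section MeanFieldPenalty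

variable {T : Type*} [MeasurableSpace T] {γ : Measure T} [IsFiniteMeasure γ] {c : T → T → ℝ}
  {M lo hi : ℝ}

theorem integral_intervalPenaltySlope_mul_mfFieldLp_le
    (hc_meas : Measurable (Function.uncurry c)) (hc_nonneg : ∀ x y, 0 ≤ c x y)
    (hc : ∀ x y, ‖c x y‖ ≤ M) (hlo : lo ≤ 1) (hhi : 1 ≤ hi)
    (v w : Lp ℝ 1 γ) (hw : 0 ≤ᵐ[γ] w) :
    ∫ x, intervalPenaltySlope lo hi (v x) * mfFieldLp γ c w x ∂γ ≤ M * ‖w‖ * ‖v - w‖ := by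
  calc ∫ x, intervalPenaltySlope lo hi (v x) * mfFieldLp γ c w x ∂γ
      ≤ ∫ x, M * ‖w‖ * ‖(v - w : Lp ℝ 1 γ) x‖ ∂γ := by
        refine integral_mono_ae ((L1.integrable_coeFn _).bdd_mul
            (Lp.aestronglyMeasurable v).intervalPenaltySlope_comp
            (ae_of_all _ fun x => abs_intervalPenaltySlope_le_one lo hi (v x)))
          ((L1.integrable_coeFn _).norm.const_mul _) ?_
        filter_upwards [mfFieldLp_ae_eq hc_meas hc w, Lp.coeFn_sub v w] with x hF hsub
        rw [hF, hsub, Pi.sub_apply, Real.norm_eq_abs]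
        exact intervalPenaltySlope_mul_le hlo hhi (cDens_nonneg hc_nonneg hw x)
          ((le_abs_self _).trans (norm_cDens_le hc w x)) _ _
    _ = M * ‖w‖ * ‖v - w‖ := by
        rw [MeasureTheory.integral_const_mul, ← L1.norm_eq_integral_norm]

theorem IsMFSolution.integral_intervalPenalty_le_add {τ : ℝ} {u₀ : Lp ℝ 1 γ}
    {u : ℝ → Lp ℝ 1 γ} (hu : IsMFSolution γ c τ u₀ u) (hc_meas : Measurable (Function.uncurry c))
    (hc_nonneg : ∀ x y, 0 ≤ c x y) (hc : ∀ x y, ‖c x y‖ ≤ M) (hM : 0 ≤ M) (hlo : lo ≤ 1)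
    (hhi : 1 ≤ hi) {K ε s t : ℝ} (hs : 0 ≤ s) (hst : s ≤ t) (ht : t ≤ τ)
    (hK : ∀ r ∈ Icc s t, ‖u r‖ ≤ K) (hε : ∀ r ∈ Icc s t, ‖u t - u r‖ ≤ ε) :
    ∫ x, intervalPenalty lo hi (u t x) ∂γ ≤
      ∫ x, intervalPenalty lo hi (u s x) ∂γ + M * K * ε * (t - s) := by
  obtain ⟨-, -, hu_nonneg, hu_eq⟩ := hu
  obtain ⟨hIs, hus⟩ := hu_eq s ⟨hs, hst.trans ht⟩
  obtain ⟨hIt, hut⟩ := hu_eq t ⟨hs.trans hst, ht⟩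
  have hI : IntervalIntegrable (fun r => mfFieldLp γ c (u r)) volume s t := hIs.symm.trans hIt
  have hincr : u t - u s = ∫ r in s..t, mfFieldLp γ c (u r) := by
    rw [hut, hus, add_sub_add_left_eq_sub, integral_interval_sub_left hIt hIs]
  have hS : MemLp (fun x => intervalPenaltySlope lo hi (u t x)) ∞ γ :=
    memLp_top_of_bound (Lp.aestronglyMeasurable (u t)).intervalPenaltySlope_comp 1
      (ae_of_all _ fun x => abs_intervalPenaltySlope_le_one lo hi (u t x))
  set Λ := (ContinuousLinearMap.mul ℝ ℝ).lpPairing γ ∞ 1 (hS.toLp _)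
  have hconvex : ∫ x, intervalPenalty lo hi (u t x) ∂γ - ∫ x, intervalPenalty lo hi (u s x) ∂γ ≤
      Λ (u t - u s) := by
    rw [lpPairing_mul_toLp_apply, integral_congr_ae ((Lp.coeFn_sub (u t) (u s)).mono
      fun x hx => congrArg (_ * ·) hx)]
    exact integral_intervalPenalty_sub_le (hlo.trans hhi) (L1.integrable_coeFn _)
      (L1.integrable_coeFn _)
  have hfield : ∀ r ∈ Icc s t, Λ (mfFieldLp γ c (u r)) ≤ M * K * ε := fun r hr => by
    rw [lpPairing_mul_toLp_apply]
    refine (integral_intervalPenaltySlope_mul_mfFieldLp_le hc_meas hc_nonneg hc hlo hhi _ _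
      (hu_nonneg r ⟨hs.trans hr.1, hr.2.trans ht⟩)).trans ?_
    exact mul_le_mul (mul_le_mul_of_nonneg_left (hK r hr) hM) (hε r hr) (norm_nonneg _)
      (mul_nonneg hM ((norm_nonneg _).trans (hK r hr)))
  have hΛ : Λ (u t - u s) ≤ M * K * ε * (t - s) := by
    rw [hincr, ← Λ.intervalIntegral_comp_comm hI]
    calc ∫ r in s..t, Λ (mfFieldLp γ c (u r)) ≤ ∫ _ in s..t, M * K * ε :=
          intervalIntegral.integral_mono_on hst ⟨Λ.integrable_comp hI.1, Λ.integrable_comp hI.2⟩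
            intervalIntegrable_const hfield
      _ = M * K * ε * (t - s) := by rw [intervalIntegral.integral_const, smul_eq_mul, mul_comm]
  linarith

end MeanFieldPenalty

theorem mf_density_bounds_general {T : Type*} [MeasurableSpace T]
    (γ : Measure T) [IsFiniteMeasure γ]
    (c : T → T → ℝ) (hc_meas : Measurable fun p : T × T => c p.1 p.2)
    (hc_nonneg : ∀ x y, 0 ≤ c x y)
    (hc_bdd : BddAbove (Set.range fun p : T × T => c p.1 p.2))
    (τ : ℝ)
    (u₀ : Lp ℝ 1 γ) (C : ℝ) (hC : 1 < C)
    (hu₀ : ∀ᵐ x ∂γ, 1 / C ≤ u₀ x ∧ u₀ x ≤ C)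
    (u : ℝ → Lp ℝ 1 γ) (hu : IsMFSolution γ c τ u₀ u) :
    ∃ Cτ : ℝ, 1 ≤ Cτ ∧
      ∀ t ∈ Set.Icc (0 : ℝ) τ, ∀ᵐ x ∂γ, 1 / Cτ ≤ u t x ∧ u t x ≤ Cτ := by
  refine ⟨C, hC.le, ?_⟩
  obtain ⟨M, hM, hcM⟩ := hc_bdd.exists_ge 1
  have hc : ∀ x y, ‖c x y‖ ≤ M := fun x y => by
    rw [Real.norm_eq_abs, abs_of_nonneg (hc_nonneg x y)]
    exact hcM _ ⟨(x, y), rfl⟩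
  obtain ⟨K, hK, huK⟩ : ∃ K > 0, ∀ s ∈ Icc 0 τ, ‖u s‖ ≤ K :=
    let ⟨K, hK⟩ := isCompact_Icc.exists_bound_of_continuousOn hu.1
    ⟨max K 1, by positivity, fun s hs => (hK s hs).trans (le_max_left _ _)⟩
  have hlo : 1 / C ≤ 1 := (div_le_one (by linarith)).2 hC.le
  set W := fun t => ∫ x, intervalPenalty (1 / C) C (u t x) ∂γ
  have hW0 : W 0 = 0 :=
    (integral_intervalPenalty_eq_zero_iff (L1.integrable_coeFn _)).2 (hu.2.1 ▸ hu₀)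
  have hW : ∀ t ∈ Icc 0 τ, W t ≤ W 0 := image_le_left_of_forall_small_increment_le fun ε hε => by
    obtain ⟨δ, hδ, hδu⟩ := Metric.uniformContinuousOn_iff_le.1
      (isCompact_Icc.uniformContinuousOn_of_continuous hu.1) (ε / (M * K)) (by positivity)
    refine ⟨δ, hδ, fun s hs t ht hst hts => ?_⟩
    have hclose : ∀ r ∈ Icc s t, ‖u t - u r‖ ≤ ε / (M * K) := fun r hr => by
      rw [← dist_eq_norm]
      refine hδu t ht r ⟨hs.1.trans hr.1, hr.2.trans ht.2⟩ ?_
      rw [Real.dist_eq, abs_of_nonneg (sub_nonneg.2 hr.2)]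
      linarith [hr.1]
    have := hu.integral_intervalPenalty_le_add hc_meas hc_nonneg hc (by positivity) hlo hC.le
      hs.1 hst ht.2 (fun r hr => huK r ⟨hs.1.trans hr.1, hr.2.trans ht.2⟩) hclose
    rwa [mul_div_cancel₀ _ (by positivity)] at this
  intro t ht
  have hWt : W t = 0 :=
    le_antisymm (hW0 ▸ hW t ht) (integral_nonneg fun x => intervalPenalty_nonneg _ _ _)
  exact (integral_intervalPenalty_eq_zero_iff (L1.integrable_coeFn _)).1 hWt

/-- Lemma 2.8: if the initial density is bounded above and below, so is the solution,
uniformly on `[0,τ]`. -/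
theorem mf_density_bounds {T : Type*} [TopologicalSpace T] [CompactSpace T] [PolishSpace T]
    [MeasurableSpace T] [BorelSpace T]
    (γ : Measure T) [IsFiniteMeasure γ]
    (c : T → T → ℝ) (hc_meas : Measurable fun p : T × T => c p.1 p.2)
    (hc_nonneg : ∀ x y, 0 ≤ c x y)
    (hc_bdd : BddAbove (Set.range fun p : T × T => c p.1 p.2))
    (hc_diag : ∀ x, c x x = 0)
    (τ : ℝ) (hτ : 0 < τ)
    (u₀ : Lp ℝ 1 γ) (C : ℝ) (hC : 1 < C)
    (hu₀ : ∀ᵐ x ∂γ, 1 / C ≤ u₀ x ∧ u₀ x ≤ C)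
    (u : ℝ → Lp ℝ 1 γ) (hu : IsMFSolution γ c τ u₀ u) :
    ∃ Cτ : ℝ, 1 ≤ Cτ ∧
      ∀ t ∈ Set.Icc (0 : ℝ) τ, ∀ᵐ x ∂γ, 1 / Cτ ≤ u t x ∧ u t x ≤ Cτ :=
  mf_density_bounds_general γ c hc_meas hc_nonneg hc_bdd τ u₀ C hC hu₀ u hu
end

section
/- For every n > 0, every N ≥ 1, and every bounded measurable function ω : (Measure T) × T → ℝ, one has ∫_{T^{N+1}} Σ_{i=1}^{N+1} Σ_{j=1}^{N+1} ω( (1/n)·Σ_{k≠i} δ_{x_k}, x_i ) · c(x_i, x_j) γ^{⊗(N+1)}(d𝐱) = (N+1) · ∫_{T^N} Σ_{j=1}^N ( ∫_T ω( (1/n)·Σ_{k=1}^N δ_{x_k}, z ) · c(z, x_j) γ(dz) ) γ^{⊗N}(d𝐱). -/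
open MeasureTheory
open scoped ENNReal Classical

/-- The rescaled empirical measure `L_N(𝐱) = (1/n)·Σ_{k} δ_{x_k}`. -/
noncomputable def empMeas {T : Type*} [MeasurableSpace T] (n : ℝ) {m : ℕ} (x : Fin m → T) :
    Measure T :=
  ENNReal.ofReal (1 / n) • ∑ k : Fin m, Measure.dirac (x k)

/-- The rescaled empirical measure with the `i`-th particle removed:
`(1/n)·Σ_{k ≠ i} δ_{x_k}`. -/
noncomputable def empMeasErase {T : Type*} [MeasurableSpace T] (n : ℝ) {m : ℕ} (x : Fin m → T)
    (i : Fin m) : Measure T :=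
  ENNReal.ofReal (1 / n) • ∑ k ∈ Finset.univ.erase i, Measure.dirac (x k)

/-!
Integrating out the `i`-th particle: the map `x ↦ (x i, x without its i-th coordinate)` carries
`γ^{⊗(N+1)}` to `γ ⊗ γ^{⊗N}`, and it turns the empirical measure of the other particles into
`L_N` of the remaining `N` particles. Since `c(x_i, x_i) = 0`, the term `j = i` drops out of the
sum over `j`, so every `i` contributes the same integral `∫∫ Σ_j ω(L_N(y), z) c(z, y_j)`, and
Fubini puts the `z`-integral inside.
-/

section EmpiricalMeasure

variable {T : Type*} [MeasurableSpace T]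

theorem measurable_smul_finsetSum_dirac {ι : Type*} (a : ℝ≥0∞) (s : Finset ι) :
    Measurable fun x : ι → T => a • ∑ k ∈ s, Measure.dirac (x k) := by
  refine Measure.measurable_of_measurable_coe _ fun t ht => ?_
  simp only [Measure.smul_apply, smul_eq_mul, Measure.finsetSum_apply,
    Measure.dirac_apply' _ ht]
  exact (Finset.measurable_sum _ fun k _ =>
    (measurable_one.indicator ht).comp (measurable_pi_apply k)).const_mul _

theorem measurable_empMeas (n : ℝ) (m : ℕ) : Measurable fun x : Fin m → T => empMeas n x :=
  measurable_smul_finsetSum_dirac _ _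

theorem empMeasErase_eq_empMeas_removeNth (n : ℝ) {m : ℕ} (x : Fin (m + 1) → T)
    (i : Fin (m + 1)) : empMeasErase n x i = empMeas n (i.removeNth x) := by
  rw [empMeasErase, empMeas, ← Finset.compl_singleton, ← Fin.image_succAbove_univ,
    Finset.sum_image fun _ _ _ _ h => Fin.succAbove_right_injective h]
  rfl

end EmpiricalMeasure

theorem Fin.sum_univ_eq_sum_removeNth_of_eq_zero {M : Type*} [AddCommMonoid M] {m : ℕ}
    (f : Fin (m + 1) → M) (i : Fin (m + 1)) (hi : f i = 0) :
    ∑ j, f j = ∑ k, i.removeNth f k := by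
  rw [Fin.sum_univ_succAbove f i, hi, zero_add]
  rfl

theorem integral_sum_removeNth_eq_nsmul {α E : Type*} [MeasurableSpace α]
    [NormedAddCommGroup E] [NormedSpace ℝ E] (μ : Measure α) [SigmaFinite μ] {N : ℕ}
    (H : α × (Fin N → α) → E) (hH : Integrable H (μ.prod (Measure.pi fun _ => μ))) :
    ∫ x, ∑ i : Fin (N + 1), H (x i, i.removeNth x) ∂Measure.pi (fun _ => μ) =
      (N + 1) • ∫ p, H p ∂μ.prod (Measure.pi fun _ => μ) := by
  have hmp (i : Fin (N + 1)) :=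
    measurePreserving_piFinSuccAbove (fun _ : Fin (N + 1) => μ) i
  have hint (i : Fin (N + 1)) :
      Integrable (fun x => H (x i, i.removeNth x)) (Measure.pi fun _ => μ) :=
    ((hmp i).integrable_comp_emb (MeasurableEquiv.measurableEmbedding _)).mpr hH
  have hval (i : Fin (N + 1)) : ∫ x, H (x i, i.removeNth x) ∂Measure.pi (fun _ => μ) =
      ∫ p, H p ∂μ.prod (Measure.pi fun _ => μ) :=
    (hmp i).integral_comp' H
  rw [integral_finsetSum _ fun i _ => hint i]
  simp only [hval, Finset.sum_const, Finset.card_univ, Fintype.card_fin]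

section Symmetrization

variable {T : Type*} [MeasurableSpace T] (γ : Measure T) [IsFiniteMeasure γ]
  (φ : Measure T → T → T → ℝ) (n : ℝ)

theorem integrable_sum_empMeas_prod
    (hφ_meas : Measurable fun p : Measure T × T × T => φ p.1 p.2.1 p.2.2)
    (hφ_bdd : ∃ C : ℝ, ∀ μ x y, |φ μ x y| ≤ C) (N : ℕ) :
    Integrable (fun p : T × (Fin N → T) => ∑ j, φ (empMeas n p.2) p.1 (p.2 j))
      (γ.prod (Measure.pi fun _ => γ)) := by
  obtain ⟨C, hC⟩ := hφ_bdd
  refine Integrable.of_bound ?_ (N * C) (Filter.Eventually.of_forall fun p => ?_)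
  · refine (Finset.measurable_sum _ fun j _ => ?_).aestronglyMeasurable
    exact hφ_meas.comp (f := fun p : T × (Fin N → T) => (empMeas n p.2, p.1, p.2 j))
      (((measurable_empMeas n N).comp measurable_snd).prodMk
        (measurable_fst.prodMk ((measurable_pi_apply j).comp measurable_snd)))
  · calc ‖∑ j, φ (empMeas n p.2) p.1 (p.2 j)‖ ≤ ∑ _j : Fin N, C :=
          (norm_sum_le _ _).trans (Finset.sum_le_sum fun j _ => hC _ _ _)
      _ = N * C := by simp

theorem symmetrization_identity_of_bounded
    (hφ_meas : Measurable fun p : Measure T × T × T => φ p.1 p.2.1 p.2.2)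
    (hφ_bdd : ∃ C : ℝ, ∀ μ x y, |φ μ x y| ≤ C) (hφ_diag : ∀ μ x, φ μ x x = 0) (N : ℕ) :
    ∫ x : Fin (N + 1) → T, (∑ i, ∑ j, φ (empMeasErase n x i) (x i) (x j))
        ∂(Measure.pi fun _ => γ) =
      (N + 1) * ∫ x : Fin N → T, (∑ j, ∫ z, φ (empMeas n x) z (x j) ∂γ)
        ∂(Measure.pi fun _ => γ) := by
  have hint := integrable_sum_empMeas_prod γ φ n hφ_meas hφ_bdd N
  have hremove (x : Fin (N + 1) → T) (i : Fin (N + 1)) :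
      ∑ j, φ (empMeasErase n x i) (x i) (x j) =
        ∑ k, φ (empMeas n (i.removeNth x)) (x i) (i.removeNth x k) := by
    rw [empMeasErase_eq_empMeas_removeNth,
      Fin.sum_univ_eq_sum_removeNth_of_eq_zero _ i (hφ_diag _ _)]
    rfl
  have hfubini : ∫ p : T × (Fin N → T), ∑ j, φ (empMeas n p.2) p.1 (p.2 j)
        ∂γ.prod (Measure.pi fun _ => γ) =
      ∫ x : Fin N → T, (∑ j, ∫ z, φ (empMeas n x) z (x j) ∂γ) ∂(Measure.pi fun _ => γ) := by
    rw [integral_prod_symm _ hint]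
    obtain ⟨C, hC⟩ := hφ_bdd
    refine integral_congr_ae (Filter.Eventually.of_forall fun x => integral_finsetSum _ ?_)
    refine fun j _ => Integrable.of_bound ?_ C (Filter.Eventually.of_forall fun z => hC _ _ _)
    exact (hφ_meas.comp (f := fun z => (empMeas n x, z, x j))
      (measurable_const.prodMk (measurable_id.prodMk measurable_const))).aestronglyMeasurable
  simp only [hremove]
  rw [integral_sum_removeNth_eq_nsmul γ _ hint, hfubini, nsmul_eq_mul]
  push_cast
  rfl

end Symmetrization

theorem symmetrization_identity_general {T : Type*} [MeasurableSpace T]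
    (γ : Measure T) [IsFiniteMeasure γ]
    (c : T → T → ℝ) (hc_meas : Measurable fun p : T × T => c p.1 p.2)
    (hc_nonneg : ∀ x y, 0 ≤ c x y)
    (hc_bdd : BddAbove (Set.range fun p : T × T => c p.1 p.2))
    (hc_diag : ∀ x, c x x = 0)
    (n : ℝ) (N : ℕ)
    (ω : Measure T → T → ℝ)
    (hω_meas : Measurable fun p : Measure T × T => ω p.1 p.2)
    (hω_bdd : ∃ B : ℝ, ∀ μ x, |ω μ x| ≤ B) :
    ∫ x : Fin (N + 1) → T,
        (∑ i : Fin (N + 1), ∑ j : Fin (N + 1),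
          ω (empMeasErase n x i) (x i) * c (x i) (x j))
        ∂(Measure.pi fun _ : Fin (N + 1) => γ) =
      (N + 1) * ∫ x : Fin N → T,
        (∑ j : Fin N, ∫ z, ω (empMeas n x) z * c z (x j) ∂γ)
        ∂(Measure.pi fun _ : Fin N => γ) := by
  obtain ⟨B, hB⟩ := hω_bdd
  obtain ⟨M, hM⟩ := hc_bdd
  have hc_abs (x y : T) : |c x y| ≤ M :=
    (abs_of_nonneg (hc_nonneg x y)).trans_le (hM ⟨(x, y), rfl⟩)
  refine symmetrization_identity_of_bounded γ (fun μ x y => ω μ x * c x y) n ?_ ?_ ?_ N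
  · exact (hω_meas.comp (f := fun p : Measure T × T × T => (p.1, p.2.1))
      (measurable_fst.prodMk measurable_snd.fst)).mul (hc_meas.comp measurable_snd)
  · refine ⟨B * M, fun μ x y => ?_⟩
    rw [abs_mul]
    exact mul_le_mul (hB μ x) (hc_abs x y) (abs_nonneg _) ((abs_nonneg _).trans (hB μ x))
  · simp [hc_diag]

/-- The fixed-`N` symmetrization identity at the core of the proof of Lemma 3.2. -/
theorem symmetrization_identity {T : Type*} [TopologicalSpace T] [CompactSpace T] [PolishSpace T]
    [MeasurableSpace T] [BorelSpace T]
    (γ : Measure T) [IsFiniteMeasure γ]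
    (c : T → T → ℝ) (hc_meas : Measurable fun p : T × T => c p.1 p.2)
    (hc_nonneg : ∀ x y, 0 ≤ c x y)
    (hc_bdd : BddAbove (Set.range fun p : T × T => c p.1 p.2))
    (hc_diag : ∀ x, c x x = 0)
    (n : ℝ) (hn : 0 < n) (N : ℕ) (hN : 1 ≤ N)
    (ω : Measure T → T → ℝ)
    (hω_meas : Measurable fun p : Measure T × T => ω p.1 p.2)
    (hω_bdd : ∃ B : ℝ, ∀ μ x, |ω μ x| ≤ B) :
    ∫ x : Fin (N + 1) → T,
        (∑ i : Fin (N + 1), ∑ j : Fin (N + 1),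
          ω (empMeasErase n x i) (x i) * c (x i) (x j))
        ∂(Measure.pi fun _ : Fin (N + 1) => γ) =
      (N + 1) * ∫ x : Fin N → T,
        (∑ j : Fin N, ∫ z, ω (empMeas n x) z * c z (x j) ∂γ)
        ∂(Measure.pi fun _ : Fin N => γ) :=
  symmetrization_identity_general γ c hc_meas hc_nonneg hc_bdd hc_diag n N ω hω_meas hω_bdd
end
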